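/- Let S be a finite multiset of points in ℝ^d with empirical mean μ(S) and let S' ⊆ S with |S'| ≥ (1 − ε)|S| for some 0 < ε < 1. Suppose every x ∈ S satisfies ‖x − μ(S)‖₂ ≤ R. Then ‖μ(S') − μ(S)‖₂ ≤ 2εR/(1 − ε). -/

import Mathlib

/-!
The deviations `x - μ(S)` sum to zero over `S`, so their sum over `S'` is minus their sum over
the removed part `S - S'`, which has at most `ε|S|` points, each of norm at most `R`. Dividing by
`|S'| ≥ (1 - ε)|S|` gives `‖μ(S') - μ(S)‖ ≤ εR/(1 - ε)`.
-/

open scoped BigOperators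

/-- The empirical mean of a finite multiset of points in `ℝ^d`. -/
noncomputable def multisetMean {d : ℕ} (S : Multiset (EuclideanSpace ℝ (Fin d))) :
    EuclideanSpace ℝ (Fin d) :=
  ((S.card : ℝ))⁻¹ • S.sum

theorem Multiset.sum_map_sub_const {E : Type*} [AddCommGroup E] (s : Multiset E) (c : E) :
    (s.map (· - c)).sum = s.sum - s.card • c := by
  simp [Multiset.sum_map_sub]

theorem Multiset.norm_sum_map_le_card_mul {α E : Type*} [SeminormedAddCommGroup E]
    {s : Multiset α} {f : α → E} {R : ℝ} (h : ∀ x ∈ s, ‖f x‖ ≤ R) :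
    ‖(s.map f).sum‖ ≤ s.card * R := by
  calc ‖(s.map f).sum‖ ≤ ((s.map f).map norm).sum := norm_multiset_sum_le _
    _ ≤ ((s.map f).map norm).card • R := Multiset.sum_le_card_nsmul _ _ (by simpa using h)
    _ = s.card * R := by rw [Multiset.card_map, Multiset.card_map, nsmul_eq_mul]

section

variable {d : ℕ}

theorem multisetMean_sub_eq_smul_sum {S : Multiset (EuclideanSpace ℝ (Fin d))} (hS : S ≠ 0)
    (c : EuclideanSpace ℝ (Fin d)) :
    multisetMean S - c = (S.card : ℝ)⁻¹ • (S.map (· - c)).sum := by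
  have hcard : (S.card : ℝ) ≠ 0 := by simpa using hS
  rw [Multiset.sum_map_sub_const, smul_sub, ← Nat.cast_smul_eq_nsmul ℝ, smul_smul,
    inv_mul_cancel₀ hcard, one_smul, multisetMean]

theorem sum_map_sub_multisetMean {S : Multiset (EuclideanSpace ℝ (Fin d))} (hS : S ≠ 0) :
    (S.map (· - multisetMean S)).sum = 0 := by
  have h := multisetMean_sub_eq_smul_sum hS (multisetMean S)
  rw [sub_self, eq_comm, smul_eq_zero] at h
  simpa [hS] using h

theorem card_mul_norm_multisetMean_sub_le {S S' : Multiset (EuclideanSpace ℝ (Fin d))} {R : ℝ}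
    (hS' : S' ≠ 0) (hsub : S' ≤ S) (hbound : ∀ x ∈ S, ‖x - multisetMean S‖ ≤ R) :
    (S'.card : ℝ) * ‖multisetMean S' - multisetMean S‖ ≤ (S - S').card * R := by
  have hS : S ≠ 0 := ne_bot_of_le_ne_bot hS' hsub
  have hsplit : (S'.map (· - multisetMean S)).sum = -((S - S').map (· - multisetMean S)).sum := by
    rw [eq_neg_iff_add_eq_zero, ← Multiset.sum_add, ← Multiset.map_add,
      add_tsub_cancel_of_le hsub, sum_map_sub_multisetMean hS]
  have hpos : (0 : ℝ) < S'.card := by simpa [Nat.pos_iff_ne_zero] using hS'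
  rw [multisetMean_sub_eq_smul_sum hS', hsplit, norm_smul, norm_neg, Real.norm_eq_abs,
    abs_of_pos (inv_pos.mpr hpos), ← mul_assoc, mul_inv_cancel₀ hpos.ne', one_mul]
  exact Multiset.norm_sum_map_le_card_mul fun x hx ↦ hbound x (Multiset.mem_of_le tsub_le_self hx)

end

/-- Let `S` be a (nonempty) finite multiset of points in `ℝ^d` with empirical
mean `μ(S)`, and let `S' ⊆ S` with `|S'| ≥ (1 − ε)|S|` for some `0 < ε < 1`.  If every
`x ∈ S` satisfies `‖x − μ(S)‖₂ ≤ R`, then `‖μ(S') − μ(S)‖₂ ≤ 2εR/(1 − ε)`. -/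
theorem mean_shift_of_removal {d : ℕ} (ε R : ℝ) (hε0 : 0 < ε) (hε1 : ε < 1)
    (S S' : Multiset (EuclideanSpace ℝ (Fin d))) (hne : S ≠ 0) (hsub : S' ≤ S)
    (hcard : (1 - ε) * (S.card : ℝ) ≤ (S'.card : ℝ))
    (hbound : ∀ x ∈ S, ‖x - multisetMean S‖ ≤ R) :
    ‖multisetMean S' - multisetMean S‖ ≤ 2 * ε * R / (1 - ε) := by
  have hn : (0 : ℝ) < S.card := by simpa [Nat.pos_iff_ne_zero] using hne
  have hm : (0 : ℝ) < S'.card := lt_of_lt_of_le (mul_pos (by linarith) hn) hcard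
  have hR : 0 ≤ R := by
    obtain ⟨x, hx⟩ := Multiset.exists_mem_of_ne_zero hne
    exact (norm_nonneg _).trans (hbound x hx)
  have hremoved : ((S - S').card : ℝ) = S.card - S'.card := by
    rw [Multiset.card_sub hsub, Nat.cast_sub (Multiset.card_le_card hsub)]
  have hshift := card_mul_norm_multisetMean_sub_le (by simpa using hm.ne') hsub hbound
  rw [hremoved] at hshift
  have hscaled : (1 - ε) * ‖multisetMean S' - multisetMean S‖ * S.card ≤ ε * R * S.card := by
    nlinarith [norm_nonneg (multisetMean S' - multisetMean S)]
  rw [le_div_iff₀ (by linarith)]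
  linarith [le_of_mul_le_mul_right hscaled hn, mul_nonneg hε0.le hR]
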